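/- arXiv:2211.13049 — 3 statements merged into one kernel-verified Lean document; each statement's English description precedes it below -/
import Mathlib

section
/- Let F : [0, ∞) → [0, 1] be nondecreasing, let ε ∈ (0, 1) and K ≥ 1, and let 0 < k₁ < ⋯ < k_K be cutoff points satisfying F(k_i) = (1 − ε/2)^{K+1−i} for i = 1, …, K. Define F*(y) = F(k_{i+1}) for y ∈ [k_i, k_{i+1}) (1 ≤ i ≤ K − 1) and F*(y) = 1 for y ≥ k_K. Then for every y ≥ k₁ one has F(y) ≥ (1 − ε/2)·F*(y); that is, on [k₁, ∞) the pointwise rejection rate 1 − F(y)/F*(y) is at most ε/2. -/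
/-- Let `F : [0, ∞) → [0, 1]` be nondecreasing, let `ε ∈ (0, 1)` and `K ≥ 1`, and let
`0 < k₁ < ⋯ < k_K` be cutoff points satisfying `F(k_i) = (1 − ε/2)^{K+1−i}` for
`i = 1, …, K`. Define `F*(y) = F(k_{i+1})` for `y ∈ [k_i, k_{i+1})` (`1 ≤ i ≤ K − 1`) and
`F*(y) = 1` for `y ≥ k_K`. Then for every `y ≥ k₁` one has `F(y) ≥ (1 − ε/2)·F*(y)`;
that is, on `[k₁, ∞)` the pointwise rejection rate `1 − F(y)/F*(y)` is at most `ε/2`. -/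
theorem stmt_6 (F Fstar : ℝ → ℝ) (ε : ℝ) (hε : ε ∈ Set.Ioo (0 : ℝ) 1)
    (K : ℕ) (hK : 1 ≤ K) (k : ℕ → ℝ)
    (hF_mono : MonotoneOn F (Set.Ici 0))
    (hF_mem : ∀ y, 0 ≤ y → F y ∈ Set.Icc (0 : ℝ) 1)
    (hk_pos : 0 < k 1)
    (hk_mono : ∀ i j, 1 ≤ i → i < j → j ≤ K → k i < k j)
    (hFk : ∀ i, 1 ≤ i → i ≤ K → F (k i) = (1 - ε / 2) ^ (K + 1 - i))
    (hFstar_step : ∀ i, 1 ≤ i → i ≤ K - 1 → ∀ y, k i ≤ y → y < k (i + 1) →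
      Fstar y = F (k (i + 1)))
    (hFstar_top : ∀ y, k K ≤ y → Fstar y = 1) :
    ∀ y, k 1 ≤ y → (1 - ε / 2) * Fstar y ≤ F y := by
  intro y hy
  have hε2 : (0:ℝ) ≤ 1 - ε / 2 := by
    have := hε.2; nlinarith [hε.1]
  have hk1_le : ∀ i, 1 ≤ i → i ≤ K → k 1 ≤ k i := by
    intro i h1 h2
    rcases eq_or_lt_of_le h1 with h | h
    · rw [← h]
    · exact (hk_mono 1 i le_rfl h h2).le
  have hy0 : 0 ≤ y := le_trans hk_pos.le hy
  rcases le_or_gt (k K) y with htop | htop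
  · rw [hFstar_top y htop, mul_one]
    have hkK0 : 0 ≤ k K := le_trans hk_pos.le (hk1_le K hK le_rfl)
    have hmono := hF_mono (Set.mem_Ici.mpr hkK0) (Set.mem_Ici.mpr hy0) htop
    have hFkK : F (k K) = (1 - ε / 2) ^ (K + 1 - K) := hFk K hK le_rfl
    have : K + 1 - K = 1 := by omega
    rw [this, pow_one] at hFkK
    linarith
  · have hK2 : 2 ≤ K := by
      by_contra hc
      have hK1 : K = 1 := by omega
      rw [hK1] at htop
      linarith
    classical
    set i := Nat.findGreatest (fun j => k j ≤ y) (K - 1) with hi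
    have hi1 : 1 ≤ i := Nat.le_findGreatest (by omega) hy
    have hiK : i ≤ K - 1 := Nat.findGreatest_le _
    have hki : k i ≤ y := Nat.findGreatest_spec (P := fun j => k j ≤ y) (m := 1) (n := K - 1) (by omega) hy
    have hlt : y < k (i + 1) := by
      rcases lt_or_eq_of_le hiK with hlt' | heq
      · by_contra hc
        exact Nat.findGreatest_is_greatest (P := fun j => k j ≤ y) (n := K - 1)
          (show i < i + 1 by omega) (by omega)
          (not_lt.mp hc)
      · have : i + 1 = K := by omega
        rw [this]; exact htop
    have hstep := hFstar_step i hi1 hiK y hki hlt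
    rw [hstep, hFk (i+1) (by omega) (by omega)]
    have hki0 : 0 ≤ k i := le_trans hk_pos.le (hk1_le i hi1 (by omega))
    have hmono := hF_mono (Set.mem_Ici.mpr hki0) (Set.mem_Ici.mpr hy0) hki
    rw [hFk i hi1 (by omega)] at hmono
    have hexp : K + 1 - i = (K + 1 - (i + 1)) + 1 := by omega
    rw [hexp, pow_succ, mul_comm] at hmono
    exact hmono
end

section
/- Let g : (0, ∞) → [0, ∞) be integrable, let c ∈ (0, 1) and s > 0, and define g'(y) = c·g(y) for 0 < y < s and g'(y) = g(y) for y ≥ s. Let y₀ > 0 and suppose ∫₀^{min(s, y₀)} g(y) dy > 0 and ∫_{max(s, y₀)}^∞ g(y) dy > 0. Then the normalized left mass strictly decreases: ∫₀^{y₀} g'(y) dy / ∫₀^∞ g'(y) dy < ∫₀^{y₀} g(y) dy / ∫₀^∞ g(y) dy. -/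
/-!
On `(0, ∞)` the new density is `g' = g - (1 - c) · 𝟙_{(0,s)} g`, so with `A`, `S`, `L`, `B` the
`g`-masses of `(0, y₀)`, `(0, s)`, `(0, min s y₀)` and `(0, ∞)` the claim reads
`(A - (1 - c) L) / (B - (1 - c) S) < A / B`, which is equivalent to `A S < L B`.
The mass beyond `max s y₀` makes both `A` and `S` strictly smaller than `B`, and `L` equals
whichever of `A`, `S` belongs to the smaller cutoff, whence `A S < L B`.
-/

open MeasureTheory Set

theorem div_sub_mul_lt_div {A B L S d : ℝ} (hd : 0 < d) (hB : 0 < B) (hdS : d * S < B)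
    (hkey : A * S < L * B) : (A - d * L) / (B - d * S) < A / B := by
  rw [div_lt_div_iff₀ (sub_pos.2 hdS) hB]
  nlinarith [mul_lt_mul_of_pos_left hkey hd]

theorem mul_lt_apply_min_mul {F : ℝ → ℝ} {x y B : ℝ} (hmin : 0 < F (min x y))
    (hx : F x < B) (hy : F y < B) : F x * F y < F (min x y) * B := by
  rcases le_total x y with h | h
  · rw [min_eq_left h] at hmin ⊢
    exact mul_lt_mul_of_pos_left hy hmin
  · rw [min_eq_right h] at hmin ⊢
    rw [mul_comm]
    exact mul_lt_mul_of_pos_left hx hmin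

section SetIntegral

variable {α : Type*} [MeasurableSpace α] {μ : Measure α}

theorem setIntegral_eq_sub_of_eqOn_mul {f f' : α → ℝ} {u t : Set α} (c : ℝ)
    (hu : MeasurableSet u) (ht : MeasurableSet t) (hf : IntegrableOn f u μ)
    (h_in : ∀ x ∈ u ∩ t, f' x = c * f x) (h_out : ∀ x ∈ u \ t, f' x = f x) :
    ∫ x in u, f' x ∂μ = ∫ x in u, f x ∂μ - (1 - c) * ∫ x in u ∩ t, f x ∂μ := by
  have h_eq : EqOn f' (fun x ↦ f x - (1 - c) * t.indicator f x) u := by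
    intro x hx
    by_cases hxt : x ∈ t
    · simp only [h_in x ⟨hx, hxt⟩, indicator_of_mem hxt]; ring
    · simp only [h_out x ⟨hx, hxt⟩, indicator_of_notMem hxt]; ring
  rw [setIntegral_congr_fun hu h_eq, integral_sub hf ((hf.indicator ht).const_mul _),
    integral_const_mul, setIntegral_indicator ht]

theorem setIntegral_Ioo_add_setIntegral_Ioi [LinearOrder α] [TopologicalSpace α]
    [OrderClosedTopology α] [OpensMeasurableSpace α] [NullSingletonClass μ] {f : α → ℝ} {a b : α}
    (hf : IntegrableOn f (Ioi a) μ) (hab : a ≤ b) :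
    ∫ x in Ioo a b, f x ∂μ + ∫ x in Ioi b, f x ∂μ = ∫ x in Ioi a, f x ∂μ := by
  rw [← integral_Ioc_eq_integral_Ioo, ← setIntegral_union (Ioc_disjoint_Ioi le_rfl)
    measurableSet_Ioi (hf.mono_set Ioc_subset_Ioi_self) (hf.mono_set (Ioi_subset_Ioi hab)),
    Ioc_union_Ioi_eq_Ioi hab]

end SetIntegral

theorem setIntegral_Ioo_lt_setIntegral_Ioi {f : ℝ → ℝ} {x₀ a b : ℝ}
    (hf_nonneg : ∀ x, x₀ < x → 0 ≤ f x) (hf : IntegrableOn f (Ioi x₀))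
    (ha : x₀ ≤ a) (hab : a ≤ b) (hpos : 0 < ∫ x in Ioi b, f x) :
    ∫ x in Ioo x₀ a, f x < ∫ x in Ioi x₀, f x := by
  have h_tail : ∫ x in Ioi b, f x ≤ ∫ x in Ioi a, f x :=
    setIntegral_mono_set (hf.mono_set (Ioi_subset_Ioi ha))
      ((ae_restrict_iff' measurableSet_Ioi).2 (.of_forall fun x hx ↦
        hf_nonneg x (ha.trans_lt hx)))
      (Ioi_subset_Ioi hab).eventuallyLE
  linarith [setIntegral_Ioo_add_setIntegral_Ioi hf ha]

/-- Let `g : (0, ∞) → [0, ∞)` be integrable, let `c ∈ (0, 1)` and `s > 0`, and define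
`g'(y) = c·g(y)` for `0 < y < s` and `g'(y) = g(y)` for `y ≥ s`. Let `y₀ > 0` and suppose
`∫₀^{min(s, y₀)} g(y) dy > 0` and `∫_{max(s, y₀)}^∞ g(y) dy > 0`. Then the normalized
left mass strictly decreases:
`∫₀^{y₀} g'(y) dy / ∫₀^∞ g'(y) dy < ∫₀^{y₀} g(y) dy / ∫₀^∞ g(y) dy`. -/
theorem stmt_10 (g g' : ℝ → ℝ) (c s y₀ : ℝ)
    (hc : c ∈ Set.Ioo (0 : ℝ) 1) (hs : 0 < s) (hy₀ : 0 < y₀)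
    (hg_nonneg : ∀ y, 0 < y → 0 ≤ g y)
    (hg_int : IntegrableOn g (Set.Ioi 0))
    (hg'_lo : ∀ y, 0 < y → y < s → g' y = c * g y)
    (hg'_hi : ∀ y, s ≤ y → g' y = g y)
    (hL : 0 < ∫ y in Set.Ioo 0 (min s y₀), g y)
    (hR : 0 < ∫ y in Set.Ioi (max s y₀), g y) :
    (∫ y in Set.Ioo 0 y₀, g' y) / (∫ y in Set.Ioi 0, g' y) <
      (∫ y in Set.Ioo 0 y₀, g y) / (∫ y in Set.Ioi 0, g y) := by
  obtain ⟨hc0, hc1⟩ := hc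
  have h_in (u : Set ℝ) (hu : u ⊆ Ioi 0) : ∀ y ∈ u ∩ Ioo 0 s, g' y = c * g y :=
    fun y hy ↦ hg'_lo y (hu hy.1) hy.2.2
  have h_out (u : Set ℝ) (hu : u ⊆ Ioi 0) : ∀ y ∈ u \ Ioo 0 s, g' y = g y :=
    fun y hy ↦ hg'_hi y (not_lt.1 fun h ↦ hy.2 ⟨hu hy.1, h⟩)
  have hA' : ∫ y in Ioo 0 y₀, g' y =
      (∫ y in Ioo 0 y₀, g y) - (1 - c) * ∫ y in Ioo 0 (min s y₀), g y := by
    rw [setIntegral_eq_sub_of_eqOn_mul c measurableSet_Ioo measurableSet_Ioo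
      (hg_int.mono_set Ioo_subset_Ioi_self) (h_in _ Ioo_subset_Ioi_self)
      (h_out _ Ioo_subset_Ioi_self), Ioo_inter_Ioo, sup_idem, inf_comm]
  have hB' : ∫ y in Ioi 0, g' y = (∫ y in Ioi 0, g y) - (1 - c) * ∫ y in Ioo 0 s, g y := by
    rw [setIntegral_eq_sub_of_eqOn_mul c measurableSet_Ioi measurableSet_Ioo hg_int
      (h_in _ subset_rfl) (h_out _ subset_rfl), Ioi_inter_Ioo, sup_idem]
  have hAB := setIntegral_Ioo_lt_setIntegral_Ioi hg_nonneg hg_int hy₀.le (le_max_right s y₀) hR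
  have hSB := setIntegral_Ioo_lt_setIntegral_Ioi hg_nonneg hg_int hs.le (le_max_left s y₀) hR
  have hS : 0 ≤ ∫ y in Ioo 0 s, g y :=
    setIntegral_nonneg measurableSet_Ioo fun y hy ↦ hg_nonneg y hy.1
  rw [hA', hB']
  refine div_sub_mul_lt_div (sub_pos.2 hc1) (hS.trans_lt hSB)
    (by nlinarith [mul_nonneg hc0.le hS]) ?_
  rw [mul_comm (∫ y in Ioo 0 y₀, g y)]
  exact mul_lt_apply_min_mul (F := fun a ↦ ∫ y in Ioo 0 a, g y) hL hSB hAB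
end

section
/- Let F : (0, ∞) → (0, 1) be a strictly increasing continuous bijection, let t > 0, and set p := log(1 − F(t)) (so p < 0). Let Y be a random variable following the exponential distribution with rate 1. Then the random variable X := F^{-1}(1 − exp(−(Y − p))) is almost surely well-defined and its law is the distribution with CDF F conditioned on (t, ∞); that is, for every x > t, P(X ≤ x) = (F(x) − F(t))/(1 − F(t)), and P(X ≤ x) = 0 for x ≤ t. -/
open MeasureTheory ProbabilityTheory Real Set Filter

/-!
Write `q := 1 - F t = exp p`. For `y > 0` the sample `u = 1 - q e^{-y}` lies in `(F t, 1)`, and since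
`F` is strictly increasing, `Finv u ≤ x ↔ u ≤ F x ↔ y ≤ log q - log (1 - F x)`. Hence the event
`{X ≤ x}` is, up to the null set `y ≤ 0`, the half-line `y ≤ log q - log (1 - F x)`, whose exponential
mass is `1 - (1 - F x) / q`; for `x ≤ t` that half-line is contained in `y ≤ 0`.
-/

lemma expMeasure_Iic {r : ℝ} (hr : 0 < r) (c : ℝ) :
    expMeasure r (Iic c) = ENNReal.ofReal (1 - exp (-(r * c))) := by
  have := isProbabilityMeasure_expMeasure hr
  rw [← ofReal_cdf, cdf_expMeasure_eq hr]
  split_ifs with hc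
  · rfl
  · rw [ENNReal.ofReal_zero, eq_comm, ENNReal.ofReal_eq_zero, sub_nonpos, one_le_exp_iff]
    nlinarith

lemma ae_pos_expMeasure {r : ℝ} (hr : 0 < r) : ∀ᵐ y ∂expMeasure r, 0 < y := by
  simp only [ae_iff, not_lt]
  exact (expMeasure_Iic hr 0).trans (by simp)

lemma one_sub_exp_neg_mem_Ioo {a : ℝ} (ha : 0 < a) : 1 - exp (-a) ∈ Ioo 0 1 :=
  ⟨sub_pos.mpr (exp_lt_one_iff.mpr (neg_lt_zero.mpr ha)), sub_lt_self 1 (exp_pos _)⟩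

lemma one_sub_exp_neg_le_iff {a v : ℝ} (hv : v < 1) :
    1 - exp (-a) ≤ v ↔ a ≤ -log (1 - v) := by
  rw [sub_le_comm, ← log_le_iff_le_exp (sub_pos.mpr hv), le_neg]

lemma inverse_sample_le_iff {F Finv : ℝ → ℝ} {p x y : ℝ}
    (hF_mono : StrictMonoOn F (Ioi 0))
    (hFinv : ∀ u ∈ Ioo (0 : ℝ) 1, Finv u ∈ Ioi (0 : ℝ) ∧ F (Finv u) = u)
    (hp : p ≤ 0) (hy : 0 < y) (hx : 0 < x) (hFx : F x < 1) :
    Finv (1 - exp (-(y - p))) ≤ x ↔ y ≤ p - log (1 - F x) := by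
  obtain ⟨hpos, hinv⟩ := hFinv _ (one_sub_exp_neg_mem_Ioo (by linarith : 0 < y - p))
  rw [← hF_mono.le_iff_le hpos hx, hinv, one_sub_exp_neg_le_iff hFx]
  constructor <;> intro h <;> linarith

theorem stmt_13_general (F Finv : ℝ → ℝ) (t p : ℝ) (ht : 0 < t)
    (hF_mono : StrictMonoOn F (Set.Ioi 0))
    (hF_bij : Set.BijOn F (Set.Ioi 0) (Set.Ioo 0 1))
    (hFinv : ∀ u ∈ Set.Ioo (0 : ℝ) 1, Finv u ∈ Set.Ioi (0 : ℝ) ∧ F (Finv u) = u)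
    (hp : p = Real.log (1 - F t)) :
    p < 0 ∧
      (∀ᵐ y ∂(expMeasure 1), 1 - Real.exp (-(y - p)) ∈ Set.Ioo (0 : ℝ) 1) ∧
      (∀ x : ℝ, t < x →
        (expMeasure 1) {y : ℝ | Finv (1 - Real.exp (-(y - p))) ≤ x} =
          ENNReal.ofReal ((F x - F t) / (1 - F t))) ∧
      ∀ x : ℝ, x ≤ t →
        (expMeasure 1) {y : ℝ | Finv (1 - Real.exp (-(y - p))) ≤ x} = 0 := by
  obtain ⟨hFt0, hFt1⟩ : F t ∈ Ioo 0 1 := hF_bij.mapsTo ht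
  have hq : 0 < 1 - F t := sub_pos.mpr hFt1
  have hp0 : p < 0 := hp ▸ log_neg hq (by linarith)
  have hevent : ∀ x, 0 < x → F x < 1 → ∀ᵐ y ∂expMeasure 1,
      (Finv (1 - exp (-(y - p))) ≤ x ↔ y ≤ p - log (1 - F x)) := fun x hx hFx =>
    (ae_pos_expMeasure one_pos).mono fun y hy =>
      inverse_sample_le_iff hF_mono hFinv hp0.le hy hx hFx
  refine ⟨hp0, (ae_pos_expMeasure one_pos).mono fun y hy => one_sub_exp_neg_mem_Ioo
    (by linarith), fun x hx => ?_, fun x hx => ?_⟩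
  · have hx0 := ht.trans hx
    have hFx : F x < 1 := (hF_bij.mapsTo hx0).2
    have hset : {y | Finv (1 - exp (-(y - p))) ≤ x} =ᵐ[expMeasure 1] Iic (p - log (1 - F x)) :=
      eventuallyEq_set.mpr (hevent x hx0 hFx)
    rw [measure_congr hset, expMeasure_Iic one_pos, one_mul,
      neg_sub, exp_sub, exp_log (sub_pos.mpr hFx), hp, exp_log hq]
    congr 1
    field_simp
    ring
  · rw [measure_eq_zero_iff_ae_notMem]
    filter_upwards [ae_pos_expMeasure one_pos, hevent t ht hFt1] with y hy hyt hyx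
    linarith [hyt.mp (le_trans hyx hx)]

/-- Let `F : (0, ∞) → (0, 1)` be a strictly increasing continuous bijection, let `t > 0`,
and set `p := log(1 − F(t))` (so `p < 0`). Let `Y` be a random variable following the
exponential distribution with rate 1. Then the random variable
`X := F⁻¹(1 − exp(−(Y − p)))` is almost surely well-defined and its law is the
distribution with CDF `F` conditioned on `(t, ∞)`; that is, for every `x > t`,
`P(X ≤ x) = (F(x) − F(t))/(1 − F(t))`, and `P(X ≤ x) = 0` for `x ≤ t`. -/
theorem stmt_13 (F Finv : ℝ → ℝ) (t p : ℝ) (ht : 0 < t)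
    (hF_mono : StrictMonoOn F (Set.Ioi 0))
    (hF_cont : ContinuousOn F (Set.Ioi 0))
    (hF_bij : Set.BijOn F (Set.Ioi 0) (Set.Ioo 0 1))
    (hFinv : ∀ u ∈ Set.Ioo (0 : ℝ) 1, Finv u ∈ Set.Ioi (0 : ℝ) ∧ F (Finv u) = u)
    (hp : p = Real.log (1 - F t)) :
    p < 0 ∧
      (∀ᵐ y ∂(expMeasure 1), 1 - Real.exp (-(y - p)) ∈ Set.Ioo (0 : ℝ) 1) ∧
      (∀ x : ℝ, t < x →
        (expMeasure 1) {y : ℝ | Finv (1 - Real.exp (-(y - p))) ≤ x} =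
          ENNReal.ofReal ((F x - F t) / (1 - F t))) ∧
      ∀ x : ℝ, x ≤ t →
        (expMeasure 1) {y : ℝ | Finv (1 - Real.exp (-(y - p))) ≤ x} = 0 :=
  stmt_13_general F Finv t p ht hF_mono hF_bij hFinv hp
end
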